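/- (Averaged radial equation for the walking-droplet model; Bessel product identity.) Define J₀(x) = (1/π)·∫₀^π cos(x·sin τ) dτ and J₁(x) = (1/π)·∫₀^π cos(τ − x·sin τ) dτ. Then for every r ∈ ℝ, (1/(2π))·∫₀^{2π} J₁(r·cos θ)·cos θ dθ = J₀(r/2)·J₁(r/2). -/

import Mathlib

/-!
With `2π J₁(a) = ∫₀^{2π} cos (t - a sin t) dt` and `2π J₀(a) = ∫₀^{2π} cos (a sin s) ds`, and since
`sin (t - a sin t)` and `sin (a sin s)` integrate to zero over a period, `4π² J₀(a) J₁(a)` is the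
integral of `cos (t - a sin t - a sin s)` over the torus. The substitution `t = u + p/2`,
`s = u - p/2`, legitimate on the torus by periodicity, together with
`sin t + sin s = 2 sin u cos (p/2)`, makes the inner integral `2π J₁(2a cos (p/2)) cos (p/2)`.
For `a = r/2` and `θ = p/2` what remains is the left-hand side, because
`θ ↦ J₁(r cos θ) cos θ` is symmetric about `π`.
-/

/-- Bessel function of the first kind of order 0, via its integral representation. -/
noncomputable def besselJ0 (x : ℝ) : ℝ :=
  (1 / Real.pi) * ∫ τ in (0:ℝ)..Real.pi, Real.cos (x * Real.sin τ)

/-- Bessel function of the first kind of order 1, via its integral representation. -/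
noncomputable def besselJ1 (x : ℝ) : ℝ :=
  (1 / Real.pi) * ∫ τ in (0:ℝ)..Real.pi, Real.cos (τ - x * Real.sin τ)

open Real MeasureTheory

section

variable {E : Type*} [NormedAddCommGroup E] [NormedSpace ℝ E] {f : ℝ → E} {T : ℝ}

theorem Function.Periodic.intervalIntegral_comp_add_right (hf : Function.Periodic f T) (c : ℝ) :
    ∫ x in 0..T, f (x + c) = ∫ x in 0..T, f x := by
  rw [intervalIntegral.integral_comp_add_right, zero_add, add_comm T c, ← zero_add c,
    hf.intervalIntegral_add_eq, zero_add]

theorem Function.Periodic.intervalIntegral_comp_sub_left (hf : Function.Periodic f T) (c : ℝ) :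
    ∫ x in 0..T, f (c - x) = ∫ x in 0..T, f x := by
  rw [intervalIntegral.integral_comp_sub_left, sub_zero]
  simpa only [sub_add_cancel, zero_add] using hf.intervalIntegral_add_eq (c - T) 0

variable {a : ℝ}

theorem intervalIntegral_eq_two_smul_of_symm (hf : ∀ x, f (2 * a - x) = f x)
    (hint : IntervalIntegrable f volume 0 a) :
    ∫ x in 0..2 * a, f x = (2 : ℝ) • ∫ x in 0..a, f x := by
  have hreflect : ∫ x in a..2 * a, f x = ∫ x in 0..a, f x := by
    have h := intervalIntegral.integral_comp_sub_left f (a := 0) (b := a) (2 * a)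
    rwa [sub_zero, show 2 * a - a = a by ring, intervalIntegral.integral_congr fun x _ => hf x,
      eq_comm] at h
  have hint' : IntervalIntegrable f volume a (2 * a) := by
    have h := hint.comp_sub_left (2 * a)
    simp only [hf, sub_zero, show 2 * a - a = a by ring] at h
    exact h.symm
  rw [← intervalIntegral.integral_add_adjacent_intervals hint hint', hreflect, two_smul]

theorem intervalIntegral_eq_zero_of_antisymm (hf : ∀ x, f (2 * a - x) = -f x) :
    ∫ x in 0..2 * a, f x = 0 := by
  have h := intervalIntegral.integral_comp_sub_left f (a := 0) (b := 2 * a) (2 * a)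
  simp only [hf, intervalIntegral.integral_neg, sub_self, sub_zero] at h
  have h2 : (2 : ℝ) • ∫ x in 0..2 * a, f x = 0 := by
    rw [two_smul]; nth_rw 1 [← h]; exact neg_add_cancel _
  exact (smul_eq_zero.mp h2).resolve_left two_ne_zero

theorem integral_integral_eq_integral_integral_mid_diff {F : ℝ → ℝ → E}
    (hF : Continuous fun q : ℝ × ℝ => F q.1 q.2) (hF₁ : ∀ s, Function.Periodic (F · s) T)
    (hF₂ : ∀ t, Function.Periodic (F t) T) :
    ∫ t in 0..T, ∫ s in 0..T, F t s = ∫ p in 0..T, ∫ u in 0..T, F (u + p / 2) (u - p / 2) := by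
  have hcont : Continuous fun q : ℝ × ℝ => F q.1 (q.1 - q.2) := by fun_prop
  have hint : IntegrableOn (Function.uncurry fun t p => F t (t - p))
      (Set.uIoc 0 T ×ˢ Set.uIoc 0 T) :=
    (hcont.continuousOn.integrableOn_compact (isCompact_uIcc.prod isCompact_uIcc)).mono_set
      (Set.prod_mono Set.uIoc_subset_uIcc Set.uIoc_subset_uIcc)
  calc ∫ t in 0..T, ∫ s in 0..T, F t s
      = ∫ t in 0..T, ∫ p in 0..T, F t (t - p) := by
        simp only [(hF₂ _).intervalIntegral_comp_sub_left]
    _ = ∫ p in 0..T, ∫ t in 0..T, F t (t - p) := intervalIntegral_intervalIntegral_swap hint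
    _ = ∫ p in 0..T, ∫ u in 0..T, F (u + p / 2) (u - p / 2) := by
        refine intervalIntegral.integral_congr fun p _ => ?_
        have hper : Function.Periodic (fun t => F t (t - p)) T := fun t => by
          simp only [show t + T - p = t - p + T by ring, hF₂ _ _, hF₁ _ _]
        simp only [← hper.intervalIntegral_comp_add_right (p / 2),
          show ∀ u, u + p / 2 - p = u - p / 2 from fun u => by ring]

end

theorem continuous_besselJ1 : Continuous besselJ1 :=
  continuous_const.mul <|
    intervalIntegral.continuous_parametric_intervalIntegral_of_continuous' (by fun_prop) 0 π

theorem integral_cos_mul_sin_eq_two_pi_mul_besselJ0 (x : ℝ) :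
    ∫ t in 0..2 * π, cos (x * sin t) = 2 * π * besselJ0 x := by
  rw [intervalIntegral_eq_two_smul_of_symm (fun t => by rw [sin_two_pi_sub, mul_neg, cos_neg])
    ((by fun_prop : Continuous fun t => cos (x * sin t)).intervalIntegrable _ _), besselJ0,
    smul_eq_mul]
  field_simp

theorem integral_sin_mul_sin_eq_zero (x : ℝ) : ∫ t in 0..2 * π, sin (x * sin t) = 0 :=
  intervalIntegral_eq_zero_of_antisymm fun t => by rw [sin_two_pi_sub, mul_neg, sin_neg]

theorem integral_cos_sub_mul_sin_eq_two_pi_mul_besselJ1 (x : ℝ) :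
    ∫ t in 0..2 * π, cos (t - x * sin t) = 2 * π * besselJ1 x := by
  have hsymm (t : ℝ) : cos (2 * π - t - x * sin (2 * π - t)) = cos (t - x * sin t) := by
    rw [sin_two_pi_sub, show 2 * π - t - x * -sin t = 2 * π - (t - x * sin t) by ring,
      cos_two_pi_sub]
  rw [intervalIntegral_eq_two_smul_of_symm hsymm
    ((by fun_prop : Continuous fun t => cos (t - x * sin t)).intervalIntegrable _ _), besselJ1,
    smul_eq_mul]
  field_simp

theorem integral_sin_sub_mul_sin_eq_zero (x : ℝ) : ∫ t in 0..2 * π, sin (t - x * sin t) = 0 :=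
  intervalIntegral_eq_zero_of_antisymm fun t => by
    rw [sin_two_pi_sub, show 2 * π - t - x * -sin t = 2 * π - (t - x * sin t) by ring,
      sin_two_pi_sub]

theorem integral_cos_sub_mul_sin_eq (c x : ℝ) :
    ∫ t in 0..2 * π, cos (c - x * sin t) = 2 * π * besselJ0 x * cos c := by
  simp only [cos_sub]
  rw [intervalIntegral.integral_add ((by fun_prop : Continuous _).intervalIntegrable _ _)
    ((by fun_prop : Continuous _).intervalIntegrable _ _),
    intervalIntegral.integral_const_mul, intervalIntegral.integral_const_mul,
    integral_cos_mul_sin_eq_two_pi_mul_besselJ0, integral_sin_mul_sin_eq_zero]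
  ring

theorem integral_cos_add_sub_mul_sin_eq (c x : ℝ) :
    ∫ t in 0..2 * π, cos (t + c - x * sin t) = 2 * π * besselJ1 x * cos c := by
  simp only [show ∀ t, t + c - x * sin t = (t - x * sin t) + c from fun t => by ring, cos_add]
  rw [intervalIntegral.integral_sub ((by fun_prop : Continuous _).intervalIntegrable _ _)
    ((by fun_prop : Continuous _).intervalIntegrable _ _),
    intervalIntegral.integral_mul_const, intervalIntegral.integral_mul_const,
    integral_cos_sub_mul_sin_eq_two_pi_mul_besselJ1, integral_sin_sub_mul_sin_eq_zero]
  ring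

theorem integral_integral_cos_sub_mul_sin_sub_mul_sin (a : ℝ) :
    ∫ t in 0..2 * π, ∫ s in 0..2 * π, cos (t - a * sin t - a * sin s)
      = 2 * π * besselJ0 a * (2 * π * besselJ1 a) := by
  simp only [integral_cos_sub_mul_sin_eq]
  rw [intervalIntegral.integral_const_mul, integral_cos_sub_mul_sin_eq_two_pi_mul_besselJ1]

theorem integral_besselJ1_mul_cos (r : ℝ) :
    ∫ θ in 0..2 * π, besselJ1 (r * cos θ) * cos θ
      = 2 * π * (besselJ0 (r / 2) * besselJ1 (r / 2)) := by
  set g : ℝ → ℝ := fun θ => besselJ1 (r * cos θ) * cos θ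
  have hg : Continuous g := (continuous_besselJ1.comp (by fun_prop)).mul continuous_cos
  have hg_symm (θ : ℝ) : g (2 * π - θ) = g θ := by simp only [g, cos_two_pi_sub]
  have h_inner (p : ℝ) :
      ∫ u in 0..2 * π, cos (u + p / 2 - r / 2 * sin (u + p / 2) - r / 2 * sin (u - p / 2))
        = 2 * π * g (p / 2) := by
    have h (u : ℝ) : u + p / 2 - r / 2 * sin (u + p / 2) - r / 2 * sin (u - p / 2)
        = u + p / 2 - r * cos (p / 2) * sin u := by
      rw [sin_add, sin_sub]; ring
    simp only [h, integral_cos_add_sub_mul_sin_eq, g]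
    ring
  have h_full := intervalIntegral_eq_two_smul_of_symm hg_symm (hg.intervalIntegrable 0 π)
  rw [smul_eq_mul] at h_full
  refine mul_left_cancel₀ (by positivity : 2 * π ≠ 0) ?_
  calc 2 * π * ∫ θ in 0..2 * π, g θ
      = ∫ p in 0..2 * π, 2 * π * g (p / 2) := by
        rw [intervalIntegral.integral_const_mul, intervalIntegral.integral_comp_div g two_ne_zero,
          h_full, zero_div, show 2 * π / 2 = π by ring, smul_eq_mul]
    _ = ∫ t in 0..2 * π, ∫ s in 0..2 * π, cos (t - r / 2 * sin t - r / 2 * sin s) := by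
        simp only [← h_inner]
        refine (integral_integral_eq_integral_integral_mid_diff
          (F := fun t s => cos (t - r / 2 * sin t - r / 2 * sin s)) (by fun_prop)
          (fun s t => ?_) (fun t s => ?_)).symm
        · simp only [sin_add_two_pi, show t + 2 * π - r / 2 * sin t - r / 2 * sin s
            = t - r / 2 * sin t - r / 2 * sin s + 2 * π by ring, cos_add_two_pi]
        · simp only [sin_add_two_pi]
    _ = 2 * π * (2 * π * (besselJ0 (r / 2) * besselJ1 (r / 2))) := by
        rw [integral_integral_cos_sub_mul_sin_sub_mul_sin]; ring

/-- **Averaged radial equation for the walking-droplet model (Bessel product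
identity).** For every `r`,
`(1/(2π)) ∫₀^{2π} J₁(r cos θ) cos θ dθ = J₀(r/2) J₁(r/2)`. -/
theorem averaged_radial_equation (r : ℝ) :
    (1 / (2 * Real.pi)) *
        ∫ θ in (0:ℝ)..(2 * Real.pi), besselJ1 (r * Real.cos θ) * Real.cos θ
      = besselJ0 (r / 2) * besselJ1 (r / 2) := by
  rw [integral_besselJ1_mul_cos]
  field_simp
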